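/- Let X ∈ ℝ^p and Y ∈ ℝ^q be random vectors with E‖X‖ < ∞ and E‖Y‖ < ∞, with laws μ and ν, and let d_X and d_Y be the associated double-centered distances. Then for all x₁, x₂, x₃, x₄ ∈ ℝ^p and y₁, y₂, y₃, y₄ ∈ ℝ^q: h((x₁,y₁),(x₂,y₂),(x₃,y₃),(x₄,y₄)) = (1/4)·Σ_{1≤i,j≤4, i≠j} d_X(x_i,x_j)·d_Y(y_i,y_j) − (1/4)·Σ_{i=1}⁴ (Σ_{j≠i} d_X(x_i,x_j))·(Σ_{j≠i} d_Y(y_i,y_j)) + (1/24)·(Σ_{1≤i,j≤4, i≠j} d_X(x_i,x_j))·(Σ_{1≤i,j≤4, i≠j} d_Y(y_i,y_j)). -/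

import Mathlib

open MeasureTheory ProbabilityTheory Filter

noncomputable section

variable {E F : Type*}

/-- Double-centered distance associated with the law `μ`. -/
def dcd [NormedAddCommGroup E] [MeasurableSpace E] (μ : Measure E) (x₁ x₂ : E) : ℝ :=
  ‖x₁ - x₂‖ - (∫ y, ‖x₁ - y‖ ∂μ) - (∫ y, ‖x₂ - y‖ ∂μ) + ∫ y, (∫ y', ‖y - y'‖ ∂μ) ∂μ

/-- Squared distance covariance of a joint law. -/
def dCov2 [NormedAddCommGroup E] [MeasurableSpace E] [NormedAddCommGroup F] [MeasurableSpace F]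
    (μ : Measure (E × F)) : ℝ :=
  ∫ z₁, (∫ z₂, dcd (μ.map Prod.fst) z₁.1 z₂.1 * dcd (μ.map Prod.snd) z₁.2 z₂.2 ∂μ) ∂μ

/-- Squared distance variance of a law. -/
def dVar2 [NormedAddCommGroup E] [MeasurableSpace E] (μ : Measure E) : ℝ :=
  ∫ x₁, (∫ x₂, dcd μ x₁ x₂ ^ 2 ∂μ) ∂μ

/-- Squared distance correlation of a joint law. -/
def dCor2 [NormedAddCommGroup E] [MeasurableSpace E] [NormedAddCommGroup F] [MeasurableSpace F]
    (μ : Measure (E × F)) : ℝ :=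
  if 0 < dVar2 (μ.map Prod.fst) * dVar2 (μ.map Prod.snd) then
    dCov2 μ / Real.sqrt (dVar2 (μ.map Prod.fst) * dVar2 (μ.map Prod.snd))
  else 0

/-- `E(|d_X(X₁,X₂)|^r)`. -/
def dMom [NormedAddCommGroup E] [MeasurableSpace E] (μ : Measure E) (r : ℝ) : ℝ :=
  ∫ x₁, (∫ x₂, |dcd μ x₁ x₂| ^ r ∂μ) ∂μ

/-- `E[g_X(X₁,X₂,X₃,X₄)]`. -/
def gMean [NormedAddCommGroup E] [MeasurableSpace E] (μ : Measure E) : ℝ :=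
  ∫ x₁, (∫ x₂, (∫ x₃, (∫ x₄,
    dcd μ x₁ x₂ * dcd μ x₁ x₃ * dcd μ x₂ x₄ * dcd μ x₃ x₄ ∂μ) ∂μ) ∂μ) ∂μ

/-- The U-centered sample distances `A*_{kl}`. -/
def Astar [NormedAddCommGroup E] (n : ℕ) (xs : Fin n → E) (k l : Fin n) : ℝ :=
  ‖xs k - xs l‖ - ((n : ℝ) - 2)⁻¹ * ∑ i, ‖xs i - xs l‖
    - ((n : ℝ) - 2)⁻¹ * ∑ j, ‖xs k - xs j‖
    + (((n : ℝ) - 1) * ((n : ℝ) - 2))⁻¹ * ∑ i, ∑ j, ‖xs i - xs j‖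

/-- Bias-corrected sample distance covariance `V*ₙ`. -/
def Vstar [NormedAddCommGroup E] [NormedAddCommGroup F] (n : ℕ)
    (xs : Fin n → E) (ys : Fin n → F) : ℝ :=
  ((n : ℝ) * ((n : ℝ) - 3))⁻¹ *
    ∑ k, ∑ l, if k = l then 0 else Astar n xs k l * Astar n ys k l

/-- Bias-corrected sample distance correlation `R*ₙ`. -/
def Rstar [NormedAddCommGroup E] [NormedAddCommGroup F] (n : ℕ)
    (xs : Fin n → E) (ys : Fin n → F) : ℝ :=
  if 0 < Vstar n xs xs * Vstar n ys ys then
    Vstar n xs ys / Real.sqrt (Vstar n xs xs * Vstar n ys ys)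
  else 0

/-- Rescaled sample distance correlation statistic `Tₙ`. -/
def Tstat [NormedAddCommGroup E] [NormedAddCommGroup F] (n : ℕ)
    (xs : Fin n → E) (ys : Fin n → F) : ℝ :=
  Real.sqrt ((n : ℝ) * ((n : ℝ) - 1) / 2) * Rstar n xs ys

/-- Studentized sample distance correlation statistic `T_R`. -/
def TRstat [NormedAddCommGroup E] [NormedAddCommGroup F] (n : ℕ)
    (xs : Fin n → E) (ys : Fin n → F) : ℝ :=
  Real.sqrt ((n : ℝ) * ((n : ℝ) - 3) / 2 - 1) * Rstar n xs ys /
    Real.sqrt (1 - Rstar n xs ys ^ 2)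

/-- Law of an i.i.d. sample of size `n` from the joint law `μ`. -/
def sampleLaw [MeasurableSpace E] [MeasurableSpace F] (μ : Measure (E × F)) (n : ℕ) :
    Measure (Fin n → E × F) :=
  Measure.pi fun _ : Fin n => μ

/-- `P(Tₙ ∈ s)` under i.i.d. sampling of size `n` from `μ`. -/
def Tprob [NormedAddCommGroup E] [MeasurableSpace E] [NormedAddCommGroup F] [MeasurableSpace F]
    (μ : Measure (E × F)) (n : ℕ) (s : Set ℝ) : ℝ :=
  (sampleLaw μ n {ω | Tstat n (fun i => (ω i).1) (fun i => (ω i).2) ∈ s}).toReal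

/-- `P(T_R ∈ s)` under i.i.d. sampling of size `n` from `μ`. -/
def TRprob [NormedAddCommGroup E] [MeasurableSpace E] [NormedAddCommGroup F] [MeasurableSpace F]
    (μ : Measure (E × F)) (n : ℕ) (s : Set ℝ) : ℝ :=
  (sampleLaw μ n {ω | TRstat n (fun i => (ω i).1) (fun i => (ω i).2) ∈ s}).toReal

/-- CDF of the standard normal distribution. -/
def stdGaussCDF (t : ℝ) : ℝ := (gaussianReal 0 1 (Set.Iic t)).toReal

/-- `B_X = E‖X₁ − X₂‖² = 2E‖X‖²`. -/
def Bmom [NormedAddCommGroup E] [MeasurableSpace E] (μ : Measure E) : ℝ :=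
  2 * ∫ x, ‖x‖ ^ 2 ∂μ

/-- `L_{x,τ}`. -/
def Lmom [NormedAddCommGroup E] [InnerProductSpace ℝ E] [MeasurableSpace E]
    (μ : Measure E) (τ : ℝ) : ℝ :=
  (∫ x, |‖x‖ ^ 2 - ∫ y, ‖y‖ ^ 2 ∂μ| ^ (2 + 2 * τ) ∂μ)
    + ∫ x₁, (∫ x₂, |(inner ℝ x₁ x₂ : ℝ)| ^ (2 + 2 * τ) ∂μ) ∂μ

/-- `E[(X₁ᵀX₂)²]`. -/
def sqInnerMom [NormedAddCommGroup E] [InnerProductSpace ℝ E] [MeasurableSpace E]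
    (μ : Measure E) : ℝ :=
  ∫ x₁, (∫ x₂, (inner ℝ x₁ x₂ : ℝ) ^ 2 ∂μ) ∂μ

/-- `E[(X₁ᵀ Σ_x X₂)²]`, using `X₁ᵀ Σ_x X₂ = E_Z[⟪X₁, Z⟫ ⟪Z, X₂⟫]`. -/
def sigQuad [NormedAddCommGroup E] [InnerProductSpace ℝ E] [MeasurableSpace E]
    (μ : Measure E) : ℝ :=
  ∫ x₁, (∫ x₂, (∫ z, (inner ℝ x₁ z : ℝ) * (inner ℝ z x₂ : ℝ) ∂μ) ^ 2 ∂μ) ∂μ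

/-- `E_x`. -/
def Emom [NormedAddCommGroup E] [InnerProductSpace ℝ E] [MeasurableSpace E]
    (μ : Measure E) (τ : ℝ) : ℝ :=
  (sigQuad μ + Bmom μ ^ (-(2 * τ)) * Lmom μ τ ^ ((2 + τ) / (1 + τ))) / sqInnerMom μ ^ 2

/-- `𝒢₁(X) = |E[(X₁ᵀX₂)² X₁ᵀΣ_x²X₂]|`. -/
def Gone [NormedAddCommGroup E] [InnerProductSpace ℝ E] [MeasurableSpace E]
    (μ : Measure E) : ℝ :=
  |∫ x₁, (∫ x₂, ((inner ℝ x₁ x₂ : ℝ) ^ 2 *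
    ∫ z, (∫ w, (inner ℝ x₁ z : ℝ) * (inner ℝ z w : ℝ) * (inner ℝ w x₂ : ℝ) ∂μ) ∂μ) ∂μ) ∂μ|

/-- `𝒢₂(X) = E[‖X₁‖²(X₁ᵀΣ_xX₂)²]`. -/
def Gtwo [NormedAddCommGroup E] [InnerProductSpace ℝ E] [MeasurableSpace E]
    (μ : Measure E) : ℝ :=
  ∫ x₁, (∫ x₂, ‖x₁‖ ^ 2 * (∫ z, (inner ℝ x₁ z : ℝ) * (inner ℝ z x₂ : ℝ) ∂μ) ^ 2 ∂μ) ∂μ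

/-- `𝒢₃(X) = E[XᵀXXᵀ] Σ_x² E[XXᵀX]`. -/
def Gthree [NormedAddCommGroup E] [InnerProductSpace ℝ E] [MeasurableSpace E]
    (μ : Measure E) : ℝ :=
  ∫ x₁, (∫ z, (∫ w, (∫ x₂,
    ‖x₁‖ ^ 2 * (inner ℝ x₁ z : ℝ) * (inner ℝ z w : ℝ) * (inner ℝ w x₂ : ℝ) * ‖x₂‖ ^ 2 ∂μ) ∂μ) ∂μ) ∂μ

/-- `N_τ(X)`. -/
def Nmom [NormedAddCommGroup E] [InnerProductSpace ℝ E] [MeasurableSpace E]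
    (μ : Measure E) (τ : ℝ) : ℝ :=
  (sigQuad μ + Bmom μ ^ (-(2 * τ)) * Lmom μ τ ^ ((2 + τ) / (1 + τ))
      + (Bmom μ)⁻¹ * (Gone μ + Gtwo μ + Gthree μ)) / sqInnerMom μ ^ 2

/-- `W(x₁, x₂) = B_X⁻¹(‖x₁ − x₂‖² − B_X)`. -/
def Wfun [NormedAddCommGroup E] [MeasurableSpace E] (μ : Measure E) (x₁ x₂ : E) : ℝ :=
  (Bmom μ)⁻¹ * (‖x₁ - x₂‖ ^ 2 - Bmom μ)

/-- The kernel `h`. -/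
def hker [NormedAddCommGroup E] [NormedAddCommGroup F] (x : Fin 4 → E) (y : Fin 4 → F) : ℝ :=
  (1 / 4) * (∑ i, ∑ j, if i = j then 0 else ‖x i - x j‖ * ‖y i - y j‖)
    - (1 / 4) * ∑ i, ((∑ j, if j = i then 0 else ‖x i - x j‖) *
        (∑ j, if j = i then 0 else ‖y i - y j‖))
    + (1 / 24) * (∑ i, ∑ j, if i = j then 0 else ‖x i - x j‖) *
        (∑ i, ∑ j, if i = j then 0 else ‖y i - y j‖)

/-- The coordinates of a law on `ℝ^p` form an `m`-dependent sequence: for every `j`, the first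
`j` coordinates are independent of the coordinates with (one-based) index `≥ j + m + 1`. -/
def mdepLaw (p m : ℕ) (μ : Measure (EuclideanSpace ℝ (Fin p))) : Prop :=
  ∀ j : ℕ,
    μ.map (fun x => ((fun i : {i : Fin p // (i : ℕ) < j} => x i.1),
        (fun i : {i : Fin p // j + m ≤ (i : ℕ)} => x i.1)))
      = (μ.map fun x => fun i : {i : Fin p // (i : ℕ) < j} => x i.1).prod
          (μ.map fun x => fun i : {i : Fin p // j + m ≤ (i : ℕ)} => x i.1)

/-- Joint law of `(X, Y)` where `Yⱼ = gⱼ(Xⱼ)`. -/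
def jointLaw (p : ℕ) (μ : Measure (EuclideanSpace ℝ (Fin p))) (g : Fin p → ℝ → ℝ) :
    Measure (EuclideanSpace ℝ (Fin p) × EuclideanSpace ℝ (Fin p)) :=
  μ.map fun x => (x, (EuclideanSpace.equiv (Fin p) ℝ).symm fun j => g j (x j))

/-- The square root of a positive semidefinite matrix, as defined in the older Mathlib
(`Matrix.PosSemidef.sqrt`, since removed). -/
def Matrix.PosSemidef.sqrt {n : Type*} [Fintype n] [DecidableEq n]
    {A : Matrix n n ℝ} (hA : A.PosSemidef) : Matrix n n ℝ :=
  (hA.1.eigenvectorUnitary : Matrix n n ℝ) *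
    Matrix.diagonal ((↑) ∘ (Real.sqrt ·) ∘ hA.1.eigenvalues) *
    (star hA.1.eigenvectorUnitary : Matrix n n ℝ)

/-- Law of `Σ^{1/2} Z` for `Z` with i.i.d. standard normal coordinates. -/
def gaussLaw (p : ℕ) (S : Matrix (Fin p) (Fin p) ℝ) (hS : S.PosSemidef) :
    Measure (EuclideanSpace ℝ (Fin p)) :=
  (Measure.pi fun _ : Fin p => gaussianReal 0 1).map
    (fun z => (EuclideanSpace.equiv (Fin p) ℝ).symm (hS.sqrt.mulVec z))

set_option maxHeartbeats 4000000 in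
/-- Lemma (h-d): representation of the kernel `h` in terms of double-centered distances. -/
theorem hker_eq_dcd (p q : ℕ)
    (μ : Measure (EuclideanSpace ℝ (Fin p))) (ν : Measure (EuclideanSpace ℝ (Fin q)))
    [IsProbabilityMeasure μ] [IsProbabilityMeasure ν]
    (hμ : Integrable (fun x => ‖x‖) μ) (hν : Integrable (fun y => ‖y‖) ν)
    (x : Fin 4 → EuclideanSpace ℝ (Fin p)) (y : Fin 4 → EuclideanSpace ℝ (Fin q)) :
    hker x y =
      (1 / 4) * (∑ i, ∑ j, if i = j then 0 else dcd μ (x i) (x j) * dcd ν (y i) (y j))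
        - (1 / 4) * ∑ i, ((∑ j, if j = i then 0 else dcd μ (x i) (x j)) *
            (∑ j, if j = i then 0 else dcd ν (y i) (y j)))
        + (1 / 24) * (∑ i, ∑ j, if i = j then 0 else dcd μ (x i) (x j)) *
            (∑ i, ∑ j, if i = j then 0 else dcd ν (y i) (y j)) := by
  set u : Fin 4 → Fin 4 → ℝ := fun i j => ‖x i - x j‖ with hu
  set v : Fin 4 → Fin 4 → ℝ := fun i j => ‖y i - y j‖ with hv
  set a : Fin 4 → ℝ := fun i => ∫ z, ‖x i - z‖ ∂μ with ha
  set b : Fin 4 → ℝ := fun i => ∫ z, ‖y i - z‖ ∂ν with hb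
  set c : ℝ := ∫ z, (∫ z', ‖z - z'‖ ∂μ) ∂μ with hc
  set d : ℝ := ∫ z, (∫ z', ‖z - z'‖ ∂ν) ∂ν with hd
  have hX : ∀ i j : Fin 4, dcd μ (x i) (x j) = u i j - a i - a j + c := fun i j => rfl
  have hY : ∀ i j : Fin 4, dcd ν (y i) (y j) = v i j - b i - b j + d := fun i j => rfl
  simp only [hker, hX, hY, Fin.sum_univ_four, Fin.reduceEq, reduceIte, hu, hv,
    norm_sub_rev (x 1) (x 0), norm_sub_rev (x 2) (x 0), norm_sub_rev (x 3) (x 0),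
    norm_sub_rev (x 2) (x 1), norm_sub_rev (x 3) (x 1), norm_sub_rev (x 3) (x 2),
    norm_sub_rev (y 1) (y 0), norm_sub_rev (y 2) (y 0), norm_sub_rev (y 3) (y 0),
    norm_sub_rev (y 2) (y 1), norm_sub_rev (y 3) (y 1), norm_sub_rev (y 3) (y 2)]
  ring

end
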